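/- arXiv:2204.01395 — 2 statements merged into one kernel-verified Lean document; each statement's English description precedes it below -/
import Mathlib

section
/- Let s be a strategy profile of a parking instance that satisfies the greedy-by-resilience invariant (the invariant maintained by Algorithm 1). Then s is a Nash equilibrium: for every agent i and every o : Option (Fin m), c i s ≤ c i (Function.update s i o). -/
/-!
Every agent holding a slot can reach it, by the invariant. So if agent `i` gets a finite cost by
moving to `j`, no lower-resilience agent holds `j`, i.e. `j ∈ F i s`. The invariant puts `i` on a
cheapest slot of `F i s`, which no lower-resilience agent holds, so `i` already pays that minimum.
-/

open Classical in
/-- The cost of agent `i` under profile `s`. -/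
noncomputable def cost {n m : ℕ} (t : Fin n → ℝ) (r : Fin m → ℝ) (f : Fin n → ℝ)
    (i : Fin n) (s : Fin n → Option (Fin m)) : WithTop ℝ :=
  match s i with
  | none => ⊤
  | some j =>
    if t i - r j ≥ 0 ∧ ¬ ∃ k, k ≠ i ∧ f k < f i ∧ s k = some j ∧ t k - r j ≥ 0
    then ((f i * (t i - r j) : ℝ) : WithTop ℝ)
    else ⊤

/-- `Feas t r f i s` is the set `F i s` of slots agent `i` can feasibly reach
that are not chosen by any agent of strictly lower resilience. -/
def Feas {n m : ℕ} (t : Fin n → ℝ) (r : Fin m → ℝ) (f : Fin n → ℝ)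
    (i : Fin n) (s : Fin n → Option (Fin m)) : Set (Fin m) :=
  { j | t i - r j ≥ 0 ∧ ∀ k, f k < f i → s k ≠ some j }

/-- The greedy-by-resilience invariant maintained by Algorithm 1. -/
def GreedyInv {n m : ℕ} (t : Fin n → ℝ) (r : Fin m → ℝ) (f : Fin n → ℝ)
    (s : Fin n → Option (Fin m)) : Prop :=
  ∀ i : Fin n,
    ((Feas t r f i s).Nonempty →
      ∃ j ∈ Feas t r f i s, s i = some j ∧
        ∀ j' ∈ Feas t r f i s, f i * (t i - r j) ≤ f i * (t i - r j')) ∧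
    (Feas t r f i s = ∅ → s i = none)

/-- Nash equilibrium: no agent can improve by a unilateral deviation. -/
def NashEq {n m : ℕ} (t : Fin n → ℝ) (r : Fin m → ℝ) (f : Fin n → ℝ)
    (s : Fin n → Option (Fin m)) : Prop :=
  ∀ (i : Fin n) (o : Option (Fin m)),
    cost t r f i s ≤ cost t r f i (Function.update s i o)

section

variable {n m : ℕ} {t : Fin n → ℝ} {r : Fin m → ℝ} {f : Fin n → ℝ}
  {s : Fin n → Option (Fin m)} {i : Fin n} {j : Fin m}

theorem cost_eq_top_of_eq_none (h : s i = none) : cost t r f i s = ⊤ := by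
  simp only [cost, h]

theorem cost_eq_of_eq_some_of_ne_top (h : s i = some j) (hc : cost t r f i s ≠ ⊤) :
    cost t r f i s = ((f i * (t i - r j) : ℝ) : WithTop ℝ) := by
  simp only [cost, h] at hc ⊢
  split_ifs at hc ⊢ <;> trivial

theorem cost_eq_of_eq_some_of_mem_feas (h : s i = some j) (hj : j ∈ Feas t r f i s) :
    cost t r f i s = ((f i * (t i - r j) : ℝ) : WithTop ℝ) := by
  simp only [cost, h]
  refine if_pos ⟨hj.1, ?_⟩
  rintro ⟨k, -, hk, hkj, -⟩
  exact hj.2 k hk hkj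

/-- A lower-resilience agent on `j` blocks `i` in `cost` only if it can reach `j`, whereas it
always removes `j` from `Feas`. -/
theorem mem_feas_of_cost_update_ne_top (hreach : ∀ k j, s k = some j → t k - r j ≥ 0)
    (hc : cost t r f i (Function.update s i (some j)) ≠ ⊤) : j ∈ Feas t r f i s := by
  simp only [cost, Function.update_self] at hc
  split_ifs at hc with hfree
  · refine ⟨hfree.1, fun k hk hkj => ?_⟩
    have hki : k ≠ i := ne_of_apply_ne f hk.ne
    exact hfree.2 ⟨k, hki, hk, by rwa [Function.update_of_ne hki], hreach k j hkj⟩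
  · exact absurd rfl hc

namespace GreedyInv

theorem reachable_of_eq_some (hs : GreedyInv t r f s) (h : s i = some j) : t i - r j ≥ 0 := by
  obtain hF | hF := (Feas t r f i s).eq_empty_or_nonempty
  · simp [(hs i).2 hF] at h
  · obtain ⟨j₀, hj₀, hi, -⟩ := (hs i).1 hF
    rw [h, Option.some_inj] at hi
    exact hi ▸ hj₀.1

theorem cost_le_of_mem_feas (hs : GreedyInv t r f s) (hj : j ∈ Feas t r f i s) :
    cost t r f i s ≤ ((f i * (t i - r j) : ℝ) : WithTop ℝ) := by
  obtain ⟨j₀, hj₀, hi, hmin⟩ := (hs i).1 ⟨j, hj⟩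
  rw [cost_eq_of_eq_some_of_mem_feas hi hj₀]
  exact_mod_cast hmin j hj

end GreedyInv

end

theorem greedyInv_isNashEq_general {n m : ℕ} (t : Fin n → ℝ) (r : Fin m → ℝ) (f : Fin n → ℝ)
    (s : Fin n → Option (Fin m)) (hs : GreedyInv t r f s) :
    ∀ (i : Fin n) (o : Option (Fin m)),
      cost t r f i s ≤ cost t r f i (Function.update s i o) := by
  rintro i (_ | j)
  · rw [cost_eq_top_of_eq_none (Function.update_self _ _ _)]
    exact le_top
  by_cases htop : cost t r f i (Function.update s i (some j)) = ⊤
  · exact htop ▸ le_top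
  rw [cost_eq_of_eq_some_of_ne_top (Function.update_self _ _ _) htop]
  exact hs.cost_le_of_mem_feas
    (mem_feas_of_cost_update_ne_top (fun _ _ => hs.reachable_of_eq_some) htop)

/-- a profile satisfying the greedy-by-resilience invariant is a
Nash equilibrium. -/
theorem greedyInv_isNashEq {n m : ℕ} (t : Fin n → ℝ) (r : Fin m → ℝ) (f : Fin n → ℝ)
    (hf_inj : Function.Injective f) (hf_bd : ∀ i, 0 ≤ f i ∧ f i ≤ 1)
    (s : Fin n → Option (Fin m)) (hs : GreedyInv t r f s) :
    ∀ (i : Fin n) (o : Option (Fin m)),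
      cost t r f i s ≤ cost t r f i (Function.update s i o) :=
  greedyInv_isNashEq_general t r f s hs
end

section
/- Every parking instance admits a Nash equilibrium strategy profile: there exists a profile s : Fin n → Option (Fin m) such that for every agent i and every o : Option (Fin m), c i s ≤ c i (Function.update s i o). -/
section

variable {α β : Type*} [Finite α] [LinearOrder β]

open Classical in
noncomputable def cheapest (g : α → β) (F : Set α) : Option α :=
  if h : F.Nonempty then some (Classical.choose (F.exists_min_image g F.toFinite h)) else none

theorem cheapest_spec (g : α → β) (F : Set α) :
    (F.Nonempty → ∃ a ∈ F, cheapest g F = some a ∧ ∀ b ∈ F, g a ≤ g b) ∧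
    (F = ∅ → cheapest g F = none) := by
  refine ⟨fun h => ?_, fun h => dif_neg (Set.not_nonempty_iff_eq_empty.mpr h)⟩
  obtain ⟨hmem, hmin⟩ := Classical.choose_spec (F.exists_min_image g F.toFinite h)
  exact ⟨_, hmem, dif_pos h, hmin⟩

end

theorem wellFounded_lt_on {α β : Type*} [Finite α] [Preorder β] (f : α → β) :
    WellFounded fun a b => f a < f b :=
  Finite.wellFounded_of_trans_of_irrefl (InvImage (· < ·) f)

section Parking

variable {n m : ℕ} (t : Fin n → ℝ) (r : Fin m → ℝ) (f : Fin n → ℝ)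

theorem feas_congr {i : Fin n} {s s' : Fin n → Option (Fin m)}
    (h : ∀ k, f k < f i → s k = s' k) : Feas t r f i s = Feas t r f i s' := by
  ext j
  simp only [Feas, Set.mem_ofPred_eq]
  exact and_congr_right fun _ => forall_congr' fun k => imp_congr_right fun hk => by rw [h k hk]

/-- Algorithm 1, by well-founded recursion on resilience. Agents that are not less resilient than
`i` are read as `none`, which `Feas t r f i` ignores. -/
noncomputable def greedy : Fin n → Option (Fin m) :=
  (wellFounded_lt_on f).fix fun i G =>
    cheapest (fun j => f i * (t i - r j))
      (Feas t r f i fun k => if h : f k < f i then G k h else none)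

theorem greedy_eq (i : Fin n) :
    greedy t r f i = cheapest (fun j => f i * (t i - r j)) (Feas t r f i (greedy t r f)) := by
  rw [greedy, WellFounded.fix_eq]
  exact congrArg _ (feas_congr t r f fun k hk => dif_pos hk)

theorem greedyInv_greedy : GreedyInv t r f (greedy t r f) := fun i => by
  rw [greedy_eq t r f i]
  exact cheapest_spec _ _

end Parking

namespace GreedyInv

variable {n m : ℕ} {t : Fin n → ℝ} {r : Fin m → ℝ} {f : Fin n → ℝ} {s : Fin n → Option (Fin m)}

theorem mem_feas (hs : GreedyInv t r f s) {i : Fin n} {j : Fin m} (hj : s i = some j) :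
    j ∈ Feas t r f i s := by
  by_cases hne : (Feas t r f i s).Nonempty
  · obtain ⟨j', hj', hsj', -⟩ := (hs i).1 hne
    rwa [Option.some.inj (hj.symm.trans hsj')]
  · rw [(hs i).2 (Set.not_nonempty_iff_eq_empty.mp hne)] at hj
    exact absurd hj (Option.some_ne_none j).symm

theorem le_of_mem_feas (hs : GreedyInv t r f s) {i : Fin n} {j j' : Fin m} (hj : s i = some j)
    (hj' : j' ∈ Feas t r f i s) : f i * (t i - r j) ≤ f i * (t i - r j') := by
  obtain ⟨j₀, -, hj₀, hmin⟩ := (hs i).1 ⟨j', hj'⟩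
  rw [Option.some.inj (hj.symm.trans hj₀)]
  exact hmin j' hj'

theorem feas_eq_empty (hs : GreedyInv t r f s) {i : Fin n} (hi : s i = none) :
    Feas t r f i s = ∅ := by
  by_contra hne
  obtain ⟨j, -, hj, -⟩ := (hs i).1 (Set.nonempty_iff_ne_empty.mpr hne)
  exact absurd (hi.symm.trans hj) (Option.some_ne_none j).symm

open Classical in
/-- The competitors of agent `i` for a slot it switches to are the less resilient agents holding
that slot, and by the invariant these can always reach it. -/
theorem cost_update_some (hs : GreedyInv t r f s) (i : Fin n) (j : Fin m) :
    cost t r f i (Function.update s i (some j)) =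
      if j ∈ Feas t r f i s then ((f i * (t i - r j) : ℝ) : WithTop ℝ) else ⊤ := by
  have hrival : (∃ k, k ≠ i ∧ f k < f i ∧ Function.update s i (some j) k = some j ∧
      t k - r j ≥ 0) ↔ ∃ k, f k < f i ∧ s k = some j := by
    constructor
    · rintro ⟨k, hki, hk, hkj, -⟩
      exact ⟨k, hk, by rwa [Function.update_of_ne hki] at hkj⟩
    · rintro ⟨k, hk, hkj⟩
      have hki : k ≠ i := by rintro rfl; exact lt_irrefl _ hk
      exact ⟨k, hki, hk, by rwa [Function.update_of_ne hki], (hs.mem_feas hkj).1⟩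
  simp only [cost, Function.update_self, hrival, Feas, Set.mem_ofPred_eq, not_exists, not_and, ne_eq]
  congr

theorem cost_update_none (i : Fin n) : cost t r f i (Function.update s i none) = ⊤ := by
  simp [cost]

theorem nashEq (hs : GreedyInv t r f s) : NashEq t r f s := by
  intro i o
  have hself : cost t r f i s = cost t r f i (Function.update s i (s i)) := by
    rw [Function.update_eq_self]
  cases hsi : s i with
  | none =>
    rw [hself, hsi, cost_update_none]
    cases o with
    | none => rw [cost_update_none]
    | some j' => rw [hs.cost_update_some, hs.feas_eq_empty hsi, if_neg (Set.notMem_empty j')]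
  | some j =>
    rw [hself, hsi, hs.cost_update_some, if_pos (hs.mem_feas hsi)]
    cases o with
    | none =>
      rw [cost_update_none]
      exact le_top
    | some j' =>
      rw [hs.cost_update_some]
      split_ifs with hj'
      · exact WithTop.coe_le_coe.mpr (hs.le_of_mem_feas hsi hj')
      · exact le_top

end GreedyInv

theorem exists_nashEq_general {n m : ℕ} (t : Fin n → ℝ) (r : Fin m → ℝ) (f : Fin n → ℝ) :
    ∃ s : Fin n → Option (Fin m), ∀ (i : Fin n) (o : Option (Fin m)),
      cost t r f i s ≤ cost t r f i (Function.update s i o) :=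
  ⟨greedy t r f, (greedyInv_greedy t r f).nashEq⟩

/-- every parking instance admits a Nash equilibrium profile. -/
theorem exists_nashEq {n m : ℕ} (t : Fin n → ℝ) (r : Fin m → ℝ) (f : Fin n → ℝ)
    (hf_inj : Function.Injective f) (hf_bd : ∀ i, 0 ≤ f i ∧ f i ≤ 1) :
    ∃ s : Fin n → Option (Fin m), ∀ (i : Fin n) (o : Option (Fin m)),
      cost t r f i s ≤ cost t r f i (Function.update s i o) :=
  exists_nashEq_general t r f
end
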